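/- Let κ be an epsilon number that is an uncountable regular cardinal and σ < κ an epsilon number. Then the map t ↦ t[κ := σ] is an order-isomorphism from M(κ, σ) ∩ [κ, κ⁺) onto [σ, σ⁺); consequently the cardinality of M(κ, σ) ∩ [κ, κ⁺) equals the cardinality of [σ, σ⁺), which is strictly less than κ. -/

import Mathlib

/-!
On ordinals whose epsilon constituents are `α` or lie below some `μ ≤ α, β`, the substitution
`α ↦ β` respects Cantor normal forms: `ω ^ e * c + r` with `r < ω ^ e` goes to
`ω ^ e' * c + r'` with `r' < ω ^ e'`, again a normal form. Together with strict monotonicity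
(proved in the same induction) this makes `β ↦ α` a two-sided inverse of `α ↦ β`.
For `α = κ` and `β = μ = σ` these ordinals, taken in `[κ, κ⁺)`, are exactly `M(κ, σ) ∩ [κ, κ⁺)`,
while `[σ, σ⁺)` consists of the ordinals `≥ σ` with constituents `≤ σ`. Finally `σ⁺ < κ`
because `κ` is regular, uncountable and closed under `ω ^ ·`.
-/

open Ordinal

def IsEps (x : Ordinal.{0}) : Prop := omega0 ^ x = x

noncomputable def nextEps (x : Ordinal.{0}) : Ordinal.{0} := sInf {e | IsEps e ∧ x < e}

inductive InEp : Ordinal.{0} → Ordinal.{0} → Prop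
  | self (x : Ordinal.{0}) (h : omega0 ^ x = x) : InEp x x
  | exp (x e c y : Ordinal.{0}) (h : omega0 ^ x ≠ x) (hm : (e, c) ∈ CNF omega0 x)
      (hy : InEp y e) : InEp y x

/-- The set of epsilon numbers appearing in the iterated Cantor normal form of `x`. -/
def Ep (x : Ordinal.{0}) : Set Ordinal.{0} := {y | InEp y x}

/-- Substitution of the epsilon number `α` by the epsilon number `e` in the
iterated Cantor normal form of `x`. -/
noncomputable def subst (α e : Ordinal.{0}) (x : Ordinal.{0}) : Ordinal.{0} :=
  if h : omega0 ^ x = x then (if x = α then e else x)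
  else ((CNF omega0 x).attach.map (fun p => omega0 ^ (subst α e p.1.1) * p.1.2)).sum
termination_by x
decreasing_by
  have hx0 : x ≠ 0 := by
    rintro rfl
    have := p.2
    simp [Ordinal.CNF.zero_right] at this
  have hle := Ordinal.CNF.fst_le_log p.2
  have hlt : Ordinal.log omega0 x < x := by
    have h1 : x < omega0 ^ x :=
      lt_of_le_of_ne (Ordinal.right_le_opow x one_lt_omega0) (Ne.symm h)
    exact (Ordinal.lt_opow_iff_log_lt one_lt_omega0 hx0).mp h1
  exact lt_of_le_of_lt hle hlt

def MSet (α e : Ordinal.{0}) : Set Ordinal.{0} :=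
  {q | q < nextEps α ∧ Ep q ∩ Set.Iio α ⊆ Set.Iio e}

open Set

section Epsilon

variable {a x : Ordinal.{0}}

lemma IsEps.pos (h : IsEps x) : 0 < x := by
  rw [← h]
  exact opow_pos x omega0_pos

lemma IsEps.log_eq (h : IsEps x) : log ω x = x := by
  conv_lhs => rw [← h]
  exact log_opow one_lt_omega0 x

lemma IsEps.CNF_eq (h : IsEps x) : CNF ω x = [(x, 1)] := by
  rw [CNF.ne_zero h.pos.ne', h.log_eq, h, Ordinal.div_self h.pos.ne', Ordinal.mod_self,
    CNF.zero_right]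

lemma log_lt_self_of_not_isEps (h : ¬IsEps x) (hx : x ≠ 0) : log ω x < x :=
  (lt_opow_iff_log_lt one_lt_omega0 hx).1 <| (right_le_opow x one_lt_omega0).lt_of_ne' h

lemma isEps_nfp_opow (a : Ordinal.{0}) : IsEps (nfp (ω ^ ·) a) :=
  nfp_fp (isNormal_opow one_lt_omega0) a

lemma isEps_nextEps_and_lt (a : Ordinal.{0}) : IsEps (nextEps a) ∧ a < nextEps a :=
  csInf_mem (s := {e | IsEps e ∧ a < e})
    ⟨_, isEps_nfp_opow (a + 1), (lt_add_one a).trans_le (le_nfp _ _)⟩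

lemma isEps_nextEps (a : Ordinal.{0}) : IsEps (nextEps a) := (isEps_nextEps_and_lt a).1

lemma lt_nextEps (a : Ordinal.{0}) : a < nextEps a := (isEps_nextEps_and_lt a).2

lemma nextEps_le {e : Ordinal.{0}} (he : IsEps e) (hae : a < e) : nextEps a ≤ e :=
  csInf_le' ⟨he, hae⟩

lemma nextEps_le_nfp (a : Ordinal.{0}) : nextEps a ≤ nfp (ω ^ ·) (a + 1) :=
  nextEps_le (isEps_nfp_opow _) ((lt_add_one a).trans_le (le_nfp _ _))

end Epsilon

section EpsilonConstituents

variable {a x y : Ordinal.{0}}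

lemma isEps_of_mem_Ep (h : y ∈ Ep x) : IsEps y := by
  induction h with
  | self x h => exact h
  | exp _ _ _ _ _ _ _ ih => exact ih

lemma le_of_mem_Ep (h : y ∈ Ep x) : y ≤ x := by
  induction h with
  | self => exact le_rfl
  | exp _ _ _ _ _ hm _ ih => exact ih.trans ((CNF.fst_le_log hm).trans (log_le_self _ _))

lemma IsEps.Ep_eq (h : IsEps x) : Ep x = {x} := by
  ext y
  constructor
  · intro hy
    cases hy with
    | self => rfl
    | exp _ _ _ _ hne => exact absurd h hne
  · rintro rfl
    exact InEp.self y h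

lemma mem_Ep_iff_exists_mem_CNF : y ∈ Ep x ↔ ∃ p ∈ CNF ω x, y ∈ Ep p.1 := by
  by_cases h : IsEps x
  · simp [h.CNF_eq]
  constructor
  · intro hy
    cases hy with
    | self _ h' => exact absurd h' h
    | exp _ e c _ _ hm hy => exact ⟨(e, c), hm, hy⟩
  · rintro ⟨⟨e, c⟩, hm, hy⟩
    exact InEp.exp x e c y h hm hy

lemma Ep_zero : Ep 0 = ∅ := by
  refine eq_empty_of_forall_notMem fun y hy => ?_
  obtain ⟨p, hp, -⟩ := mem_Ep_iff_exists_mem_CNF.1 hy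
  simp [CNF.zero_right] at hp

lemma Ep_log_subset (x : Ordinal.{0}) : Ep (log ω x) ⊆ Ep x := by
  rcases eq_or_ne x 0 with rfl | hx
  · simp [Ep_zero]
  intro y hy
  exact mem_Ep_iff_exists_mem_CNF.2 ⟨_, by rw [CNF.ne_zero hx]; exact List.mem_cons_self, hy⟩

lemma Ep_mod_subset (x : Ordinal.{0}) : Ep (x % ω ^ log ω x) ⊆ Ep x := by
  rcases eq_or_ne x 0 with rfl | hx
  · simp [Ep_zero]
  intro y hy
  obtain ⟨p, hp, hyp⟩ := mem_Ep_iff_exists_mem_CNF.1 hy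
  exact mem_Ep_iff_exists_mem_CNF.2
    ⟨p, by rw [CNF.ne_zero hx]; exact List.mem_cons_of_mem _ hp, hyp⟩

lemma lt_of_Ep_subset_Iio {ε : Ordinal.{0}} (hε : IsEps ε) (h : Ep x ⊆ Iio ε) : x < ε := by
  induction x using WellFoundedLT.induction with
  | _ x ih =>
  by_cases hx : IsEps x
  · exact h (hx.Ep_eq ▸ rfl)
  rcases eq_or_ne x 0 with rfl | hx0
  · exact hε.pos
  have hlog : log ω x < ε :=
    ih _ (log_lt_self_of_not_isEps hx hx0) ((Ep_log_subset x).trans h)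
  calc x < ω ^ Order.succ (log ω x) := lt_opow_succ_log_self one_lt_omega0 x
    _ ≤ ω ^ ε := opow_le_opow_right omega0_pos (Order.succ_le_of_lt hlog)
    _ = ε := hε

lemma Ep_subset_Iic_iff_lt_nextEps : Ep x ⊆ Iic a ↔ x < nextEps a := by
  refine ⟨fun h => lt_of_Ep_subset_Iio (isEps_nextEps a)
    (h.trans fun y hy => lt_of_le_of_lt hy (lt_nextEps a)), fun h y hy => ?_⟩
  by_contra hya
  exact ((le_of_mem_Ep hy).trans_lt h).not_ge
    (nextEps_le (isEps_of_mem_Ep hy) (not_le.1 hya))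

end EpsilonConstituents

section Substitution

variable {α β e c r x : Ordinal.{0}}

lemma subst_of_isEps (h : IsEps x) : subst α β x = if x = α then β else x := by
  rw [subst]
  exact dif_pos h

lemma subst_self (hα : IsEps α) : subst α β α = β := by
  rw [subst_of_isEps hα, if_pos rfl]

lemma subst_zero : subst α β 0 = 0 := by
  rw [subst, dif_neg (by simp), CNF.zero_right]
  rfl

lemma subst_eq_sum_CNF (hβ : IsEps β) (x : Ordinal.{0}) :
    subst α β x = ((CNF ω x).map fun p => ω ^ subst α β p.1 * p.2).sum := by
  by_cases h : IsEps x
  · simp only [h.CNF_eq, List.map_cons, List.map_nil, List.sum_cons, List.sum_nil, add_zero,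
      mul_one]
    rw [subst_of_isEps h]
    split_ifs
    exacts [hβ.symm, h.symm]
  · rw [subst, dif_neg (show ¬ω ^ x = x from h)]
    exact congrArg List.sum (List.attach_map_val
      (f := fun p : Ordinal × Ordinal => ω ^ subst α β p.1 * p.2))

lemma subst_of_CNF_eq_cons (hβ : IsEps β) (h : CNF ω x = (e, c) :: CNF ω r) :
    subst α β x = ω ^ subst α β e * c + subst α β r := by
  rw [subst_eq_sum_CNF hβ, h, List.map_cons, List.sum_cons, ← subst_eq_sum_CNF hβ]

lemma subst_of_ne_zero (hβ : IsEps β) (hx : x ≠ 0) :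
    subst α β x = ω ^ subst α β (log ω x) * (x / ω ^ log ω x) + subst α β (x % ω ^ log ω x) :=
  subst_of_CNF_eq_cons hβ (CNF.ne_zero hx)

lemma subst_eq_self (hβ : IsEps β) (h : α ∉ Ep x) : subst α β x = x := by
  induction x using WellFoundedLT.induction with
  | _ x ih =>
  by_cases hx : IsEps x
  · rw [subst_of_isEps hx, if_neg]
    rintro rfl
    exact h (hx.Ep_eq ▸ rfl)
  rcases eq_or_ne x 0 with rfl | hx0
  · exact subst_zero
  rw [subst_of_ne_zero hβ hx0,
    ih _ (log_lt_self_of_not_isEps hx hx0) fun h' => h (Ep_log_subset x h'),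
    ih _ (mod_opow_log_lt_self ω hx0) fun h' => h (Ep_mod_subset x h'), div_add_mod]

end Substitution

def EpBounded (α μ : Ordinal.{0}) : Set Ordinal.{0} := {x | Ep x ⊆ insert α (Iio μ)}

section EpBounded

variable {α β μ t b x : Ordinal.{0}}

lemma self_mem_EpBounded (hα : IsEps α) : α ∈ EpBounded α μ := by
  simp [EpBounded, hα.Ep_eq]

lemma log_mem_EpBounded (hx : x ∈ EpBounded α μ) : log ω x ∈ EpBounded α μ :=
  (Ep_log_subset x).trans hx

lemma mod_mem_EpBounded (hx : x ∈ EpBounded α μ) : x % ω ^ log ω x ∈ EpBounded α μ :=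
  (Ep_mod_subset x).trans hx

lemma subst_lt_subst_of_isEps (hβ : IsEps β) (hμ : IsEps μ) (hμα : μ ≤ α) (hμβ : μ ≤ β)
    (ht : t ∈ EpBounded α μ) (hb : b ∈ EpBounded α μ) (hbε : IsEps b) (htb : t < b) :
    subst α β t < subst α β b := by
  have hbα : b = α ∨ b < μ := hb (hbε.Ep_eq ▸ rfl)
  have htα : t < α := htb.trans_le (hbα.elim le_of_eq fun h => h.le.trans hμα)
  have hαt : α ∉ Ep t := fun h => (le_of_mem_Ep h).not_gt htα
  have htμ : t < μ := lt_of_Ep_subset_Iio hμ fun y hy =>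
    (ht hy).resolve_left fun hyα => hαt (hyα ▸ hy)
  rw [subst_eq_self hβ hαt, subst_of_isEps hbε]
  rcases hbα with rfl | hbμ
  · rw [if_pos rfl]
    exact htμ.trans_le hμβ
  · rw [if_neg (hbμ.trans_le hμα).ne]
    exact htb

lemma subst_lt_subst_of_not_isEps (hβ : IsEps β) (ht : t ∈ EpBounded α μ) (htb : t < b)
    (hlog : ∀ x ∈ EpBounded α μ, x < ω ^ log ω b → subst α β x < ω ^ subst α β (log ω b))
    (hmod : ∀ t ∈ EpBounded α μ, t < b % ω ^ log ω b →
      subst α β t < subst α β (b % ω ^ log ω b)) :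
    subst α β t < subst α β b := by
  have hb0 : b ≠ 0 := htb.ne_bot
  set E := log ω b
  rw [subst_of_ne_zero hβ hb0]
  rcases lt_or_ge t (ω ^ E) with htE | hEt
  · exact (hlog t ht htE).trans_le ((le_mul_left _ (div_opow_log_pos ω hb0)).trans le_self_add)
  have ht0 : t ≠ 0 := ((opow_pos E omega0_pos).trans_le hEt).ne'
  have hlogt : log ω t = E :=
    (log_mono_right _ htb.le).antisymm (le_log_of_opow_le one_lt_omega0 hEt)
  have htr : t % ω ^ E ∈ EpBounded α μ := hlogt ▸ mod_mem_EpBounded ht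
  have hsr : subst α β (t % ω ^ E) < ω ^ subst α β E :=
    hlog _ htr (mod_lt t (opow_ne_zero _ omega0_ne_zero))
  rw [subst_of_ne_zero hβ ht0, hlogt]
  rcases (div_le_left htb.le (ω ^ E)).lt_or_eq with hc | hc
  · exact (opow_mul_add_lt_opow_mul hsr hc).trans_le le_self_add
  · have hrR : ω ^ E * (t / ω ^ E) + t % ω ^ E < ω ^ E * (b / ω ^ E) + b % ω ^ E := by
      rwa [div_add_mod, div_add_mod]
    rw [hc, add_lt_add_iff_left] at hrR ⊢
    exact hmod _ htr hrR

/- Comparing normal forms needs the bound at smaller exponents, while the bound at `b` needs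
monotonicity at `b` itself, so the two are proved by one induction. -/
lemma subst_lt_subst_and_lt_opow (hβ : IsEps β) (hμ : IsEps μ) (hμα : μ ≤ α) (hμβ : μ ≤ β)
    (hb : b ∈ EpBounded α μ) :
    (∀ t ∈ EpBounded α μ, t < b → subst α β t < subst α β b) ∧
      ∀ x ∈ EpBounded α μ, x < ω ^ b → subst α β x < ω ^ subst α β b := by
  induction b using WellFoundedLT.induction with
  | _ b ih =>
  have hlt : ∀ t ∈ EpBounded α μ, t < b → subst α β t < subst α β b := by
    intro t ht htb
    by_cases hbε : IsEps b
    · exact subst_lt_subst_of_isEps hβ hμ hμα hμβ ht hb hbε htb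
    have hb0 : b ≠ 0 := htb.ne_bot
    exact subst_lt_subst_of_not_isEps hβ ht htb
      (ih _ (log_lt_self_of_not_isEps hbε hb0) (log_mem_EpBounded hb)).2
      (ih _ (mod_opow_log_lt_self ω hb0) (mod_mem_EpBounded hb)).1
  refine ⟨hlt, fun x hx hxb => ?_⟩
  rcases eq_or_ne x 0 with rfl | hx0
  · rw [subst_zero]
    exact opow_pos _ omega0_pos
  have hxb' : log ω x < b := (lt_opow_iff_log_lt one_lt_omega0 hx0).1 hxb
  rw [subst_of_ne_zero hβ hx0]
  exact opow_mul_add_lt_opow (div_opow_log_lt x one_lt_omega0)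
    ((ih _ hxb' (log_mem_EpBounded hx)).2 _ (mod_mem_EpBounded hx)
      (mod_lt x (opow_ne_zero _ omega0_ne_zero)))
    (hlt _ (log_mem_EpBounded hx) hxb')

lemma subst_strictMonoOn (hβ : IsEps β) (hμ : IsEps μ) (hμα : μ ≤ α) (hμβ : μ ≤ β) :
    StrictMonoOn (subst α β) (EpBounded α μ) := fun t ht _ hb htb =>
  (subst_lt_subst_and_lt_opow hβ hμ hμα hμβ hb).1 t ht htb

lemma CNF_subst (hβ : IsEps β) (hμ : IsEps μ) (hμα : μ ≤ α) (hμβ : μ ≤ β)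
    (hx : x ∈ EpBounded α μ) (hx0 : x ≠ 0) :
    CNF ω (subst α β x) =
      (subst α β (log ω x), x / ω ^ log ω x) :: CNF ω (subst α β (x % ω ^ log ω x)) := by
  have hr : subst α β (x % ω ^ log ω x) < ω ^ subst α β (log ω x) :=
    (subst_lt_subst_and_lt_opow hβ hμ hμα hμβ (log_mem_EpBounded hx)).2 _
      (mod_mem_EpBounded hx) (mod_lt x (opow_ne_zero _ omega0_ne_zero))
  rw [subst_of_ne_zero hβ hx0]
  exact CNF.opow_mul_add one_lt_omega0 (div_opow_log_pos ω hx0).ne'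
    (div_opow_log_lt x one_lt_omega0) hr

lemma subst_mem_EpBounded (hβ : IsEps β) (hμ : IsEps μ) (hμα : μ ≤ α) (hμβ : μ ≤ β)
    (hx : x ∈ EpBounded α μ) : subst α β x ∈ EpBounded β μ := by
  induction x using WellFoundedLT.induction with
  | _ x ih =>
  by_cases hxε : IsEps x
  · rw [subst_of_isEps hxε]
    split_ifs with hxα
    · exact self_mem_EpBounded hβ
    · show Ep x ⊆ _
      rw [hxε.Ep_eq, singleton_subset_iff]
      exact Or.inr ((hx (hxε.Ep_eq ▸ rfl)).resolve_left hxα)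
  rcases eq_or_ne x 0 with rfl | hx0
  · simp [subst_zero, EpBounded, Ep_zero]
  intro y hy
  obtain ⟨p, hp, hyp⟩ := mem_Ep_iff_exists_mem_CNF.1 hy
  rw [CNF_subst hβ hμ hμα hμβ hx hx0, List.mem_cons] at hp
  rcases hp with rfl | hp
  · exact ih _ (log_lt_self_of_not_isEps hxε hx0) (log_mem_EpBounded hx) hyp
  · exact ih _ (mod_opow_log_lt_self ω hx0) (mod_mem_EpBounded hx)
      (mem_Ep_iff_exists_mem_CNF.2 ⟨p, hp, hyp⟩)

lemma subst_subst (hα : IsEps α) (hβ : IsEps β) (hμ : IsEps μ) (hμα : μ ≤ α) (hμβ : μ ≤ β)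
    (hx : x ∈ EpBounded α μ) : subst β α (subst α β x) = x := by
  induction x using WellFoundedLT.induction with
  | _ x ih =>
  by_cases hxε : IsEps x
  · rw [subst_of_isEps hxε]
    split_ifs with hxα
    · rw [subst_self hβ, hxα]
    · rw [subst_of_isEps hxε, if_neg]
      rintro rfl
      exact ((hx (hxε.Ep_eq ▸ rfl)).resolve_left hxα).not_ge hμβ
  rcases eq_or_ne x 0 with rfl | hx0
  · rw [subst_zero, subst_zero]
  rw [subst_of_CNF_eq_cons hα (CNF_subst hβ hμ hμα hμβ hx hx0),
    ih _ (log_lt_self_of_not_isEps hxε hx0) (log_mem_EpBounded hx),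
    ih _ (mod_opow_log_lt_self ω hx0) (mod_mem_EpBounded hx), div_add_mod]

lemma mapsTo_subst (hα : IsEps α) (hβ : IsEps β) (hμ : IsEps μ) (hμα : μ ≤ α) (hμβ : μ ≤ β) :
    MapsTo (subst α β) (EpBounded α μ ∩ Ici α) (EpBounded β μ ∩ Ici β) := by
  rintro t ⟨ht, hαt⟩
  have hβt := (subst_strictMonoOn hβ hμ hμα hμβ).monotoneOn (self_mem_EpBounded hα) ht hαt
  rw [subst_self hα] at hβt
  exact ⟨subst_mem_EpBounded hβ hμ hμα hμβ ht, hβt⟩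

lemma bijOn_subst (hα : IsEps α) (hβ : IsEps β) (hμ : IsEps μ) (hμα : μ ≤ α) (hμβ : μ ≤ β) :
    BijOn (subst α β) (EpBounded α μ ∩ Ici α) (EpBounded β μ ∩ Ici β) :=
  InvOn.bijOn
    ⟨fun _ hx => subst_subst hα hβ hμ hμα hμβ hx.1, fun _ hx => subst_subst hβ hα hμ hμβ hμα hx.1⟩
    (mapsTo_subst hα hβ hμ hμα hμβ) (mapsTo_subst hβ hα hμ hμβ hμα)

end EpBounded

lemma MSet_inter_Ico_eq {κ σ : Ordinal.{0}} (hσκ : σ ≤ κ) :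
    MSet κ σ ∩ Ico κ (nextEps κ) = EpBounded κ σ ∩ Ici κ := by
  ext t
  constructor
  · rintro ⟨⟨htn, hsub⟩, hκt, -⟩
    refine ⟨fun y hy => ?_, hκt⟩
    rcases (mem_Iic.1 (Ep_subset_Iic_iff_lt_nextEps.2 htn hy)).eq_or_lt with hyκ | hyκ
    · exact Or.inl hyκ
    · exact Or.inr (hsub ⟨hy, hyκ⟩)
  · rintro ⟨ht, hκt⟩
    have htn : t < nextEps κ := Ep_subset_Iic_iff_lt_nextEps.1 <| ht.trans <| by
      rw [← Iio_insert]
      exact insert_subset_insert (Iio_subset_Iio hσκ)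
    exact ⟨⟨htn, fun y hy => (ht hy.1).resolve_left hy.2.ne⟩, hκt, htn⟩

lemma nextEps_lt_ord {c : Cardinal.{0}} (hc : c.IsRegular) (hc' : Cardinal.aleph0 < c)
    (hω : ∀ i < c.ord, ω ^ i < c.ord) {a : Ordinal.{0}} (ha : a < c.ord) : nextEps a < c.ord :=
  (nextEps_le_nfp a).trans_lt <| Cardinal.nfp_lt_ord_of_isRegular hc hc'.ne' hω <| by
    rw [← Order.succ_eq_add_one]
    exact (Cardinal.isSuccLimit_ord hc.aleph0_le).succ_lt ha

lemma mk_Ico_nextEps_lt {κ σ : Ordinal.{0}} (hκ : IsEps κ) (hord : κ.card.ord = κ)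
    (hreg : κ.card.IsRegular) (hunc : Cardinal.aleph0 < κ.card) (hσκ : σ < κ) :
    Cardinal.mk (Ico σ (nextEps σ)) < Cardinal.lift.{1} κ.card := by
  have hω : ∀ i < κ.card.ord, ω ^ i < κ.card.ord := fun i hi => by
    rw [hord] at hi ⊢
    exact hκ ▸ (opow_lt_opow_iff_right one_lt_omega0).2 hi
  have hnext : nextEps σ < κ.card.ord := nextEps_lt_ord hreg hunc hω (by rwa [hord])
  calc Cardinal.mk (Ico σ (nextEps σ)) ≤ Cardinal.mk (Iio (nextEps σ)) :=
        Cardinal.mk_le_mk_of_subset Ico_subset_Iio_self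
    _ = Cardinal.lift (nextEps σ).card := Cardinal.mk_Iio_ordinal _
    _ < Cardinal.lift κ.card := Cardinal.lift_lt.2 (Cardinal.lt_ord.1 hnext)

/-- For κ an epsilon number which is an uncountable regular cardinal and σ < κ an
epsilon number, t ↦ t[κ := σ] is an order isomorphism from M(κ, σ) ∩ [κ, κ⁺)
onto [σ, σ⁺); hence these sets are equinumerous, of cardinality < κ. -/
theorem subst_orderIso_card (κ σ : Ordinal.{0}) (hκ : IsEps κ)
    (hord : κ.card.ord = κ) (hreg : κ.card.IsRegular)
    (hunc : Cardinal.aleph0 < κ.card) (hσ : IsEps σ) (hσκ : σ < κ) :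
    (∀ t ∈ MSet κ σ ∩ Set.Ico κ (nextEps κ),
        subst κ σ t ∈ Set.Ico σ (nextEps σ)) ∧
    (∀ t ∈ MSet κ σ ∩ Set.Ico κ (nextEps κ),
      ∀ t' ∈ MSet κ σ ∩ Set.Ico κ (nextEps κ),
        (t < t' ↔ subst κ σ t < subst κ σ t')) ∧
    (∀ r ∈ Set.Ico σ (nextEps σ),
        ∃ t ∈ MSet κ σ ∩ Set.Ico κ (nextEps κ), subst κ σ t = r) ∧
    Cardinal.mk ↥(MSet κ σ ∩ Set.Ico κ (nextEps κ)) =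
      Cardinal.mk ↥(Set.Ico σ (nextEps σ)) ∧
    Cardinal.mk ↥(Set.Ico σ (nextEps σ)) < Cardinal.lift.{1} κ.card := by
  have hS : MSet κ σ ∩ Ico κ (nextEps κ) = EpBounded κ σ ∩ Ici κ := MSet_inter_Ico_eq hσκ.le
  have hT : Ico σ (nextEps σ) = EpBounded σ σ ∩ Ici σ := by
    rw [← MSet_inter_Ico_eq le_rfl, inter_eq_right.2 fun r hr =>
      show r ∈ MSet σ σ from ⟨hr.2, inter_subset_right⟩]
  have hbij : BijOn (subst κ σ) (MSet κ σ ∩ Ico κ (nextEps κ)) (Ico σ (nextEps σ)) := by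
    rw [hS, hT]
    exact bijOn_subst hκ hσ hσ hσκ.le le_rfl
  have hmono : StrictMonoOn (subst κ σ) (MSet κ σ ∩ Ico κ (nextEps κ)) :=
    hS ▸ (subst_strictMonoOn hσ hσ hσκ.le le_rfl).mono inter_subset_left
  exact ⟨hbij.mapsTo, fun t ht t' ht' => (hmono.lt_iff_lt ht ht').symm, hbij.surjOn,
    Cardinal.mk_congr (hbij.equiv _), mk_Ico_nextEps_lt hκ hord hreg hunc hσκ⟩
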